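/- arXiv:1704.00297 — 4 statements merged into one kernel-verified Lean document; each statement's English description precedes it below -/
import Mathlib

section
/- For a finite set S, n ∈ ℕ, and π ∈ Δ^{(n)}(S), the type class T^{(n)}_π S = {x̄ ∈ S^n : empirical distribution of x̄ equals π} satisfies exp(n·h(π) − |S|·ln(n+1)) ≤ |T^{(n)}_π S| ≤ exp(n·h(π)). -/
open scoped Classical BigOperators
open Finset

noncomputable section

/-- A probability distribution on a finite set. -/
def IsDist {S : Type*} [Fintype S] (p : S → ℝ) : Prop :=
  (∀ x, 0 ≤ p x) ∧ ∑ x, p x = 1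

/-- Shannon entropy (natural logarithm). -/
def ent {S : Type*} [Fintype S] (p : S → ℝ) : ℝ :=
  -∑ x, p x * Real.log (p x)

/-- Relative entropy (Kullback–Leibler divergence). -/
def KL {S : Type*} [Fintype S] (p q : S → ℝ) : ℝ :=
  ∑ x, p x * Real.log (p x / q x)

/-- The n-fold product (Bernoulli) distribution. -/
def powDist {S : Type*} [Fintype S] (p : S → ℝ) (n : ℕ) : (Fin n → S) → ℝ :=
  fun f => ∏ i, p (f i)

/-- Tensor product of two distributions. -/
def prodDist {S T : Type*} [Fintype S] [Fintype T] (p : S → ℝ) (q : T → ℝ) :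
    S × T → ℝ :=
  fun z => p z.1 * q z.2

/-- Empirical distribution of a sequence. -/
def emp {S : Type*} [Fintype S] {n : ℕ} (f : Fin n → S) : S → ℝ :=
  fun a => ((univ.filter (fun i => f i = a)).card : ℝ) / n

/-- A coupling (joint distribution with given marginals). -/
def IsCoupling {S T : Type*} [Fintype S] [Fintype T]
    (w : S × T → ℝ) (p : S → ℝ) (q : T → ℝ) : Prop :=
  IsDist w ∧ (∀ x, ∑ y, w (x, y) = p x) ∧ (∀ y, ∑ x, w (x, y) = q y)

/-- The intrinsic Kolmogorov–Sinai distance. -/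
def kdist {S T : Type*} [Fintype S] [Fintype T] (p : S → ℝ) (q : T → ℝ) : ℝ :=
  sInf {d : ℝ | ∃ w : S × T → ℝ, IsCoupling w p q ∧ d = 2 * ent w - ent p - ent q}

end

/-! Write `k = n π` for the letter counts of the type class. Counting words by their letter
counts, i.e. reading off the coefficient of `∏ X_a ^ k_a` in `(∑ X_a) ^ n`, the type class has
`multinomial k` elements, each of probability `∏ π_a ^ k_a = exp (-n h(π))` under `π^⊗n`.
By the multinomial theorem the type class probabilities `Q(l) = multinomial l * ∏ π_a ^ l_a`
sum to `1`, which gives the upper bound. The lower bound holds because `Q` is maximal at `l = k`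
(from `m! m^l ≤ l! m^m`) and there are at most `(n + 1) ^ |S|` types. -/

open scoped Nat
open MvPolynomial

theorem Nat.factorial_mul_pow_le_factorial_mul_pow (m l : ℕ) : m ! * m ^ l ≤ l ! * m ^ m := by
  rcases le_total l m with h | h
  · have hdesc : l ! * m.descFactorial (m - l) = m ! := by
      simpa [Nat.sub_sub_self h] using Nat.factorial_mul_descFactorial (Nat.sub_le m l)
    calc m ! * m ^ l ≤ l ! * m ^ (m - l) * m ^ l := by
          rw [← hdesc]; gcongr; exact Nat.descFactorial_le_pow m _
      _ = l ! * m ^ m := by rw [mul_assoc, ← pow_add, Nat.sub_add_cancel h]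
  · calc m ! * m ^ l = m ! * m ^ (l - m) * m ^ m := by
          rw [mul_assoc, ← pow_add, Nat.sub_add_cancel h]
      _ ≤ m ! * (m + 1) ^ (l - m) * m ^ m := by gcongr; omega
      _ ≤ l ! * m ^ m := by
          gcongr
          simpa [Nat.add_sub_cancel' h] using
            Nat.factorial_mul_pow_le_factorial (m := m) (n := l - m)

theorem Nat.multinomial_mul_prod_pow_le {ι : Type*} (s : Finset ι) (k l : ι → ℕ)
    (h : ∑ i ∈ s, l i = ∑ i ∈ s, k i) :
    multinomial s l * ∏ i ∈ s, k i ^ l i ≤ multinomial s k * ∏ i ∈ s, k i ^ k i := by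
  refine Nat.le_of_mul_le_mul_right (c := (∏ i ∈ s, (l i)!) * ∏ i ∈ s, (k i)!) ?_
    (by positivity)
  calc _ = (∑ i ∈ s, l i)! * ∏ i ∈ s, ((k i)! * k i ^ l i) := by
        rw [← multinomial_spec s l, prod_mul_distrib]; ring
    _ ≤ (∑ i ∈ s, k i)! * ∏ i ∈ s, ((l i)! * k i ^ k i) := by
        rw [h]
        exact Nat.mul_le_mul_left _
          (prod_le_prod' fun i _ => factorial_mul_pow_le_factorial_mul_pow (k i) (l i))
    _ = _ := by
        rw [← multinomial_spec s k, prod_mul_distrib]; ring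

section TypeClass

variable {S : Type*} [Fintype S]

theorem card_piAntidiag_univ_le (n : ℕ) :
    #(piAntidiag (univ : Finset S) n) ≤ (n + 1) ^ Fintype.card S := by
  calc #(piAntidiag (univ : Finset S) n)
      ≤ #(Fintype.piFinset fun _ : S => range (n + 1)) := by
        refine card_le_card fun l hl => ?_
        rw [mem_piAntidiag] at hl
        simpa [Nat.lt_succ_iff, ← hl.1] using fun a => single_le_sum (by simp) (mem_univ a)
    _ = (n + 1) ^ Fintype.card S := by simp

theorem card_filter_card_fiber_eq_multinomial {n : ℕ} (k : S → ℕ) (hk : ∑ a, k a = n) :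
    #{f : Fin n → S | ∀ a, #{i | f i = a} = k a} = Nat.multinomial univ k := by
  set d : S →₀ ℕ := Finsupp.equivFunOnFinite.symm k
  have hcontent (f : Fin n → S) :
      ∑ i, Finsupp.single (f i) 1 = d ↔ ∀ a, #{i | f i = a} = k a := by
    simp [DFunLike.ext_iff, Finsupp.finsetSum_apply, Finsupp.single_apply, d]
  have hexpand : (∑ a, X a : MvPolynomial S ℕ) ^ n =
      ∑ f : Fin n → S, monomial (∑ i, Finsupp.single (f i) 1) 1 := by
    simp_rw [monomial_sum_one, ← X.eq_def, ← Fin.prod_const, Fintype.prod_sum]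
  have hcoeff := coeff_sum_X_pow_of_fintype (R := ℕ) d n
  simp only [hexpand, coeff_sum, coeff_monomial, sum_boole, hcontent, Nat.cast_id] at hcoeff
  rw [hcoeff, if_pos, Finsupp.multinomial_eq_of_support_subset (subset_univ _)]
  · rfl
  · simp [Finsupp.sum_fintype, d, hk]

theorem prod_pow_eq_exp_neg_mul_ent (p : S → ℝ) {n : ℕ} (hn : n ≠ 0) (k : S → ℕ)
    (hk : ∀ a, p a = k a / n) :
    ∏ a, p a ^ k a = Real.exp (-(n * ent p)) := by
  have hterm (a : S) : p a ^ k a = Real.exp (n * (p a * Real.log (p a))) := by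
    rcases (k a).eq_zero_or_pos with h | h
    · simp [hk a, h]
    · have hpos : 0 < p a := by rw [hk a]; positivity
      calc p a ^ k a = Real.exp (k a * Real.log (p a)) := by
            rw [← Real.log_pow, Real.exp_log (pow_pos hpos _)]
        _ = Real.exp (n * (p a * Real.log (p a))) := by
            congr 1; rw [hk a]; field_simp
  rw [prod_congr rfl fun a _ => hterm a, ← Real.exp_sum, ← mul_sum, ent, mul_neg, neg_neg]

/-- The probability, under i.i.d. sampling from `p`, of the words with letter counts `l`. -/
def typeClassProb (p : S → ℝ) (l : S → ℕ) : ℝ :=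
  Nat.multinomial univ l * ∏ a, p a ^ l a

theorem sum_typeClassProb (p : S → ℝ) (n : ℕ) :
    ∑ l ∈ piAntidiag univ n, typeClassProb p l = (∑ a, p a) ^ n :=
  (sum_pow_eq_sum_piAntidiag univ p n).symm

theorem typeClassProb_nonneg {p : S → ℝ} (hp : ∀ a, 0 ≤ p a) (l : S → ℕ) :
    0 ≤ typeClassProb p l :=
  mul_nonneg (Nat.cast_nonneg _) (prod_nonneg fun a _ => pow_nonneg (hp a) _)

theorem typeClassProb_le_one {p : S → ℝ} (hp : IsDist p) {n : ℕ} {k : S → ℕ}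
    (hk : ∑ a, k a = n) :
    typeClassProb p k ≤ 1 := by
  calc typeClassProb p k ≤ ∑ l ∈ piAntidiag univ n, typeClassProb p l :=
        single_le_sum (fun l _ => typeClassProb_nonneg hp.1 l) (mem_piAntidiag.2 ⟨hk, by simp⟩)
    _ = 1 := by rw [sum_typeClassProb, hp.2, one_pow]

theorem typeClassProb_le_of_eq_div {n : ℕ} (k l : S → ℕ) (hk : ∑ a, k a = n)
    (hl : ∑ a, l a = n) :
    typeClassProb (fun a => (k a : ℝ) / n) l ≤ typeClassProb (fun a => (k a : ℝ) / n) k := by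
  simp_rw [typeClassProb, div_pow, prod_div_distrib, prod_pow_eq_pow_sum, hk, hl,
    ← mul_div_assoc]
  refine div_le_div_of_nonneg_right ?_ (by positivity)
  exact_mod_cast Nat.multinomial_mul_prod_pow_le univ k l (hl.trans hk.symm)

theorem one_le_mul_typeClassProb {n : ℕ} (k : S → ℕ) (hk : ∑ a, k a = n) :
    1 ≤ ((n : ℝ) + 1) ^ Fintype.card S * typeClassProb (fun a => (k a : ℝ) / n) k := by
  set p : S → ℝ := fun a => (k a : ℝ) / n
  have hsum : (∑ a, p a) ^ n = 1 := by
    rcases n.eq_zero_or_pos with rfl | hn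
    · rw [pow_zero]
    · rw [← sum_div, ← Nat.cast_sum, hk, div_self (by positivity), one_pow]
  calc (1 : ℝ) = ∑ l ∈ piAntidiag univ n, typeClassProb p l := by rw [sum_typeClassProb, hsum]
    _ ≤ ∑ l ∈ piAntidiag univ n, typeClassProb p k :=
        sum_le_sum fun l hl => typeClassProb_le_of_eq_div k l hk (mem_piAntidiag.1 hl).1
    _ ≤ ((n : ℝ) + 1) ^ Fintype.card S * typeClassProb p k := by
        rw [sum_const, nsmul_eq_mul]
        gcongr
        · exact typeClassProb_nonneg (fun a => by positivity) k
        · exact_mod_cast card_piAntidiag_univ_le n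

theorem IsDist.exists_eq_div {p : S → ℝ} (hp : IsDist p) {n : ℕ}
    (hden : ∀ x, ∃ k : ℕ, p x = k / n) :
    n ≠ 0 ∧ ∃ k : S → ℕ, ∑ a, k a = n ∧ ∀ a, p a = k a / n := by
  choose k hk using hden
  have hsum := hp.2
  simp_rw [hk, ← sum_div] at hsum
  have hn : n ≠ 0 := by rintro rfl; simp at hsum
  rw [div_eq_one_iff_eq (by positivity)] at hsum
  exact ⟨hn, k, by exact_mod_cast hsum, hk⟩

theorem emp_eq_iff_card_fiber_eq {p : S → ℝ} {n : ℕ} (hn : n ≠ 0) {k : S → ℕ}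
    (hk : ∀ a, p a = k a / n) (xs : Fin n → S) :
    emp xs = p ↔ ∀ a, #{i | xs i = a} = k a := by
  simp [funext_iff, emp, hk, div_left_inj' (Nat.cast_ne_zero.2 hn : (n : ℝ) ≠ 0)]

end TypeClass

theorem stmt5_general {S : Type*} [Fintype S] (n : ℕ)
    (π : S → ℝ) (hπ : IsDist π) (hden : ∀ x, ∃ k : ℕ, π x = (k : ℝ) / n) :
    Real.exp ((n : ℝ) * ent π - Fintype.card S * Real.log (n + 1))
        ≤ (Nat.card {xs : Fin n → S // emp xs = π} : ℝ) ∧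
    (Nat.card {xs : Fin n → S // emp xs = π} : ℝ) ≤ Real.exp ((n : ℝ) * ent π) := by
  obtain ⟨hn, k, hkn, hk⟩ := hπ.exists_eq_div hden
  have hcard : (Nat.card {xs : Fin n → S // emp xs = π} : ℝ) = Nat.multinomial univ k := by
    rw [Nat.card_eq_fintype_card, Fintype.card_subtype,
      filter_congr fun xs _ => emp_eq_iff_card_fiber_eq hn hk xs,
      card_filter_card_fiber_eq_multinomial k hkn]
  have hπ_eq : (fun a => (k a : ℝ) / n) = π := funext fun a => (hk a).symm
  have hprob : typeClassProb π k = Nat.multinomial univ k / Real.exp (n * ent π) := by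
    rw [typeClassProb, prod_pow_eq_exp_neg_mul_ent π hn k hk, Real.exp_neg, div_eq_mul_inv]
  have hupper := typeClassProb_le_one hπ hkn
  have hlower := one_le_mul_typeClassProb k hkn
  rw [hπ_eq, hprob, ← mul_div_assoc, one_le_div (Real.exp_pos _)] at hlower
  rw [hprob, div_le_one (Real.exp_pos _)] at hupper
  have hpow : Real.exp (Fintype.card S * Real.log (n + 1)) = ((n : ℝ) + 1) ^ Fintype.card S := by
    rw [Real.exp_nat_mul, Real.exp_log (by positivity)]
  rw [hcard, Real.exp_sub, hpow, div_le_iff₀ (by positivity)]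
  exact ⟨by linarith, hupper⟩

theorem stmt5 {S : Type*} [Fintype S] (n : ℕ) (hn : 0 < n)
    (π : S → ℝ) (hπ : IsDist π) (hden : ∀ x, ∃ k : ℕ, π x = (k : ℝ) / n) :
    Real.exp ((n : ℝ) * ent π - Fintype.card S * Real.log (n + 1))
        ≤ (Nat.card {xs : Fin n → S // emp xs = π} : ℝ) ∧
    (Nat.card {xs : Fin n → S // emp xs = π} : ℝ) ≤ Real.exp ((n : ℝ) * ent π) :=
  stmt5_general n π hπ hden
end

section
/- Let X = (S,p) be a finite probability space and let τ_n be the push-forward of p^{⊗n} under the empirical distribution map q : S^n → Δ(S). Then for every r > 0, τ_n(Δ(S) \ B_r(p)) ≤ exp(−n·r + |S|·ln(n+1)), where B_r(p) = {π : D(π‖p) ≤ r}. -/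
open scoped Classical BigOperators
open Finset

/-! The method of types. Writing `q` for the empirical distribution of `xs`, the probability
of `xs` under `p^{⊗n}` is at most `exp (-n D(q‖p))` times its probability under `q^{⊗n}`.
Grouping the sequences by their type, the `q^{⊗n}`-probabilities of the sequences of a given
type `q` add up to at most `1`, and there are at most `(n + 1)^|S|` types. -/

open Real

section MethodOfTypes

variable {S : Type*}

noncomputable def empCount {n : ℕ} (f : Fin n → S) (a : S) : ℕ :=
  #(univ.filter fun i => f i = a)

lemma empCount_le {n : ℕ} (f : Fin n → S) (a : S) : empCount f a ≤ n :=
  (card_filter_le _ _).trans_eq (card_fin n)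

variable [Fintype S]

lemma emp_apply {n : ℕ} (f : Fin n → S) (a : S) : emp f a = empCount f a / n := rfl

lemma sum_empCount {n : ℕ} (f : Fin n → S) : ∑ a, empCount f a = n := by
  simpa [empCount] using (card_eq_sum_card_fiberwise fun i (_ : i ∈ univ) => mem_univ (f i)).symm

lemma isDist_emp {n : ℕ} (hn : n ≠ 0) (f : Fin n → S) : IsDist (emp f) := by
  refine ⟨fun a => by rw [emp_apply]; positivity, ?_⟩
  simp only [emp_apply, ← sum_div]
  rw [← Nat.cast_sum, sum_empCount, div_self (Nat.cast_ne_zero.mpr hn)]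

lemma powDist_nonneg {p : S → ℝ} (hp : ∀ x, 0 ≤ p x) (n : ℕ) (f : Fin n → S) :
    0 ≤ powDist p n f :=
  prod_nonneg fun i _ => hp (f i)

lemma sum_powDist (p : S → ℝ) (n : ℕ) :
    ∑ f : Fin n → S, powDist p n f = (∑ a, p a) ^ n := by
  rw [← Fin.prod_const, Fintype.prod_sum]
  rfl

lemma powDist_eq_prod_pow_empCount (p : S → ℝ) {n : ℕ} (f : Fin n → S) :
    powDist p n f = ∏ a, p a ^ empCount f a := by
  rw [powDist, ← prod_fiberwise univ f fun i => p (f i)]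
  refine prod_congr rfl fun a _ => ?_
  rw [prod_congr rfl fun i hi => congrArg p (mem_filter.mp hi).2, prod_const]
  rfl

lemma pow_le_pow_mul_exp_neg_mul_log_div {x y : ℝ} (hx : 0 ≤ x) (hy : 0 < y) (k : ℕ) :
    x ^ k ≤ y ^ k * exp (-(k * log (y / x))) := by
  rcases hx.eq_or_lt with rfl | hx
  · rcases k with _ | k
    · simp
    · rw [zero_pow k.succ_ne_zero]
      positivity
  · rw [exp_neg, exp_nat_mul, exp_log (div_pos hy hx), div_pow, inv_div,
      mul_div_cancel₀ _ (pow_ne_zero k hy.ne')]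

lemma natCast_mul_KL_emp {n : ℕ} (hn : n ≠ 0) (f : Fin n → S) (p : S → ℝ) :
    n * KL (emp f) p = ∑ a, empCount f a * log (emp f a / p a) := by
  rw [KL, mul_sum]
  refine sum_congr rfl fun a _ => ?_
  rw [← mul_assoc, emp_apply, mul_div_cancel₀ _ (Nat.cast_ne_zero.mpr hn)]

/-- Equality holds unless `p` vanishes at a letter of `f`, where `KL` sees the junk value
`log (q / 0) = 0`. -/
lemma powDist_le_powDist_emp_mul_exp {p : S → ℝ} (hp : ∀ x, 0 ≤ p x) {n : ℕ}
    (hn : n ≠ 0) (f : Fin n → S) :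
    powDist p n f ≤ powDist (emp f) n f * exp (-(n * KL (emp f) p)) := by
  have factor_le (a : S) : p a ^ empCount f a
      ≤ emp f a ^ empCount f a * exp (-(empCount f a * log (emp f a / p a))) := by
    rcases Nat.eq_zero_or_pos (empCount f a) with h0 | hpos
    · simp [h0]
    · refine pow_le_pow_mul_exp_neg_mul_log_div (hp a) ?_ _
      rw [emp_apply]
      positivity
  calc powDist p n f = ∏ a, p a ^ empCount f a := powDist_eq_prod_pow_empCount p f
    _ ≤ ∏ a, emp f a ^ empCount f a * exp (-(empCount f a * log (emp f a / p a))) :=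
        prod_le_prod (fun a _ => pow_nonneg (hp a) _) fun a _ => factor_le a
    _ = powDist (emp f) n f * exp (-(n * KL (emp f) p)) := by
        rw [prod_mul_distrib, ← exp_sum, sum_neg_distrib, natCast_mul_KL_emp hn,
          powDist_eq_prod_pow_empCount]

lemma card_image_emp_le (n : ℕ) :
    #(univ.image (emp : (Fin n → S) → S → ℝ)) ≤ (n + 1) ^ Fintype.card S := by
  have image_subset : univ.image (emp : (Fin n → S) → S → ℝ)
      ⊆ univ.image fun c : S → Fin (n + 1) => fun a => (c a : ℝ) / n := by
    intro q hq
    obtain ⟨f, -, rfl⟩ := mem_image.mp hq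
    exact mem_image.mpr
      ⟨fun a => ⟨empCount f a, Nat.lt_succ_of_le (empCount_le f a)⟩, mem_univ _, rfl⟩
  calc _ ≤ _ := card_le_card image_subset
    _ ≤ _ := card_image_le
    _ = (n + 1) ^ Fintype.card S := by simp

lemma sum_powDist_emp_le {n : ℕ} (hn : n ≠ 0) :
    ∑ f : Fin n → S, powDist (emp f) n f ≤ (n + 1) ^ Fintype.card S := by
  have type_class_le (q : S → ℝ) (hq : q ∈ univ.image (emp : (Fin n → S) → S → ℝ)) :
      ∑ f ∈ univ.filter (fun f : Fin n → S => emp f = q), powDist (emp f) n f ≤ 1 := by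
    obtain ⟨f₀, -, rfl⟩ := mem_image.mp hq
    have hq := isDist_emp hn f₀
    calc _ = ∑ f ∈ univ.filter (fun f : Fin n → S => emp f = emp f₀),
            powDist (emp f₀) n f :=
          sum_congr rfl fun f hf => by rw [(mem_filter.mp hf).2]
      _ ≤ ∑ f : Fin n → S, powDist (emp f₀) n f :=
          sum_le_sum_of_subset_of_nonneg (filter_subset _ _)
            fun f _ _ => powDist_nonneg hq.1 n f
      _ = 1 := by rw [sum_powDist, hq.2, one_pow]
  calc ∑ f : Fin n → S, powDist (emp f) n f
      = ∑ q ∈ univ.image (emp : (Fin n → S) → S → ℝ),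
          ∑ f ∈ univ.filter (fun f : Fin n → S => emp f = q), powDist (emp f) n f :=
        (sum_fiberwise_of_maps_to (fun f _ => mem_image_of_mem _ (mem_univ f)) _).symm
    _ ≤ ∑ _q ∈ univ.image emp, (1 : ℝ) := sum_le_sum type_class_le
    _ ≤ (n + 1) ^ Fintype.card S := by
        rw [sum_const, nsmul_one]
        exact_mod_cast card_image_emp_le n

end MethodOfTypes

theorem stmt7_general {S : Type*} [Fintype S] (p : S → ℝ) (hp : IsDist p)
    (n : ℕ) (hn : 0 < n) (r : ℝ) :
    ∑ xs ∈ univ.filter (fun xs : Fin n → S => ¬ KL (emp xs) p ≤ r), powDist p n xs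
      ≤ Real.exp (-(n : ℝ) * r + Fintype.card S * Real.log (n + 1)) := by
  have hn₀ : n ≠ 0 := hn.ne'
  have powDist_emp_nonneg (xs : Fin n → S) := powDist_nonneg (isDist_emp hn₀ xs).1 n xs
  calc ∑ xs ∈ univ.filter (fun xs : Fin n → S => ¬ KL (emp xs) p ≤ r), powDist p n xs
      ≤ ∑ xs ∈ univ.filter (fun xs : Fin n → S => ¬ KL (emp xs) p ≤ r),
          powDist (emp xs) n xs * exp (-(n : ℝ) * r) := by
        refine sum_le_sum fun xs hxs => ?_
        have hKL : r < KL (emp xs) p := not_le.mp (mem_filter.mp hxs).2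
        refine (powDist_le_powDist_emp_mul_exp hp.1 hn₀ xs).trans ?_
        refine mul_le_mul_of_nonneg_left (exp_le_exp.mpr ?_) (powDist_emp_nonneg xs)
        nlinarith [(Nat.cast_pos.mpr hn : (0 : ℝ) < n)]
    _ ≤ (∑ xs : Fin n → S, powDist (emp xs) n xs) * exp (-(n : ℝ) * r) := by
        rw [← sum_mul]
        exact mul_le_mul_of_nonneg_right
          (sum_le_sum_of_subset_of_nonneg (filter_subset _ _) fun xs _ _ => powDist_emp_nonneg xs)
          (exp_pos _).le
    _ ≤ (n + 1) ^ Fintype.card S * exp (-(n : ℝ) * r) :=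
        mul_le_mul_of_nonneg_right (sum_powDist_emp_le hn₀) (exp_pos _).le
    _ = exp (-(n : ℝ) * r + Fintype.card S * log (n + 1)) := by
        rw [exp_add, exp_nat_mul, exp_log (by positivity), mul_comm]

theorem stmt7 {S : Type*} [Fintype S] (p : S → ℝ) (hp : IsDist p)
    (n : ℕ) (hn : 0 < n) (r : ℝ) (hr : 0 < r) :
    ∑ xs ∈ univ.filter (fun xs : Fin n → S => ¬ KL (emp xs) p ≤ r), powDist p n xs
      ≤ Real.exp (-(n : ℝ) * r + Fintype.card S * Real.log (n + 1)) :=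
  stmt7_general p hp n hn r
end

section
/- For finite probability spaces, the intrinsic Kolmogorov–Sinai distance k(X,Y) := inf over all couplings Z of X and Y of [2·Ent(Z) − Ent(X) − Ent(Y)] is a pseudo-metric on the class of finite probability spaces, and k(X,Y) = 0 if and only if X and Y are isomorphic (there is a measure-preserving bijection between the supports of their measures). -/
open scoped Classical BigOperators
open Finset

/-- Isomorphism of finite probability spaces: a measure-preserving bijection
between the supports of the measures. -/
def ProbIso {S T : Type*} [Fintype S] [Fintype T] (p : S → ℝ) (q : T → ℝ) : Prop :=
  ∃ e : {x : S // p x ≠ 0} ≃ {y : T // q y ≠ 0}, ∀ x, q (e x).val = p x.val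

/-! Push-forward along a map never increases entropy, and preserves it exactly when the map is
injective on the support. So for a coupling `w` of `p` and `q` the quantity
`2 H(w) - H(p) - H(q)` is nonnegative, and it vanishes only if both projections are injective
on the support of `w`, which then is the graph of a measure-preserving bijection between the
supports of `p` and `q`; compactness of the set of couplings gives an optimal one. For the
triangle inequality, couplings of `(p, q)` and `(q, u)` are glued relatively independently over
`q`: the glued distribution has entropy `H(w₁) + H(w₂) - H(q)`, and its `(x, z)`-marginal, a
coupling of `p` and `u`, has no more. -/

open Function Set Real

section mapDist

variable {A B C : Type*} [Fintype A]

noncomputable def mapDist (g : A → B) (w : A → ℝ) (b : B) : ℝ :=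
  ∑ a, if g a = b then w a else 0

variable {g : A → B} {w : A → ℝ}

theorem sum_mapDist_mul [Fintype B] (g : A → B) (w : A → ℝ) (f : B → ℝ) :
    ∑ b, mapDist g w b * f b = ∑ a, w a * f (g a) := by
  simp only [mapDist, Finset.sum_mul, ite_mul, zero_mul]
  rw [Finset.sum_comm]
  simp

theorem sum_mapDist [Fintype B] (g : A → B) (w : A → ℝ) : ∑ b, mapDist g w b = ∑ a, w a := by
  simpa using sum_mapDist_mul g w 1

theorem mapDist_comp [Fintype B] (g : B → C) (h : A → B) (w : A → ℝ) :
    mapDist g (mapDist h w) = mapDist (g ∘ h) w := by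
  ext c
  simpa [mapDist, mul_ite] using sum_mapDist_mul h w (fun b => if g b = c then 1 else 0)

theorem mapDist_id (w : A → ℝ) : mapDist id w = w := by
  ext a
  simp [mapDist]

theorem mapDist_nonneg (hw : ∀ a, 0 ≤ w a) (b : B) : 0 ≤ mapDist g w b :=
  Finset.sum_nonneg fun a _ => by split_ifs <;> simp [hw a]

theorem IsDist.mapDist [Fintype B] (hw : IsDist w) (g : A → B) : IsDist (mapDist g w) :=
  ⟨mapDist_nonneg hw.1, by rw [sum_mapDist, hw.2]⟩

theorem le_mapDist (hw : ∀ a, 0 ≤ w a) (a : A) : w a ≤ mapDist g w (g a) := by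
  simpa [mapDist] using Finset.single_le_sum (f := fun a' => if g a' = g a then w a' else 0)
    (fun a' _ => by split_ifs <;> simp [hw a']) (Finset.mem_univ a)

theorem mapDist_apply_of_injOn (hg : InjOn g (support w)) {a : A} (ha : w a ≠ 0) :
    mapDist g w (g a) = w a := by
  rw [mapDist, Finset.sum_eq_single a]
  · simp
  · intro a' _ ha'
    split_ifs with h
    · by_contra h'
      exact ha' (hg h' ha h)
    · rfl
  · simp

theorem exists_of_mapDist_ne_zero {b : B} (h : mapDist g w b ≠ 0) : ∃ a, w a ≠ 0 ∧ g a = b := by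
  obtain ⟨a, -, ha⟩ := Finset.exists_ne_zero_of_sum_ne_zero h
  by_cases hab : g a = b
  · exact ⟨a, by simpa [hab] using ha, hab⟩
  · simp [hab] at ha

theorem bijOn_mapDist_of_injOn (hg : InjOn g (support w)) :
    BijOn g (support w) (support (mapDist g w)) := by
  refine ⟨fun a ha => ?_, hg, fun b hb => ?_⟩
  · rwa [mem_support, mapDist_apply_of_injOn hg ha]
  · obtain ⟨a, ha, rfl⟩ := exists_of_mapDist_ne_zero hb
    exact ⟨a, ha, rfl⟩

theorem mapDist_eq_of_bijOn {v : B → ℝ} (hg : BijOn g (support w) (support v))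
    (hgv : ∀ a ∈ support w, v (g a) = w a) : mapDist g w = v := by
  ext b
  by_cases hb : v b = 0
  · rw [hb]
    by_contra hne
    obtain ⟨a, ha, rfl⟩ := exists_of_mapDist_ne_zero hne
    exact hg.mapsTo ha hb
  · obtain ⟨a, ha, rfl⟩ := hg.surjOn hb
    rw [mapDist_apply_of_injOn hg.injOn ha, hgv a ha]

theorem ent_sub_ent_mapDist [Fintype B] (g : A → B) (w : A → ℝ) :
    ent w - ent (mapDist g w) = ∑ a, w a * (log (mapDist g w (g a)) - log (w a)) := by
  rw [ent, ent, sum_mapDist_mul g w (fun b => log (mapDist g w b))]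
  simp only [mul_sub, Finset.sum_sub_distrib]
  ring

theorem mul_log_mapDist_sub_log_nonneg (hw : ∀ a, 0 ≤ w a) (a : A) :
    0 ≤ w a * (log (mapDist g w (g a)) - log (w a)) := by
  rcases (hw a).eq_or_lt with ha | ha
  · simp [← ha]
  · exact mul_nonneg ha.le (sub_nonneg.2 (log_le_log ha (le_mapDist hw a)))

theorem ent_mapDist_le [Fintype B] (hw : ∀ a, 0 ≤ w a) : ent (mapDist g w) ≤ ent w := by
  have := Finset.sum_nonneg fun a (_ : a ∈ Finset.univ) =>
    mul_log_mapDist_sub_log_nonneg (g := g) hw a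
  linarith [ent_sub_ent_mapDist g w]

theorem ent_mapDist_eq_iff_injOn [Fintype B] (hw : ∀ a, 0 ≤ w a) :
    ent (mapDist g w) = ent w ↔ InjOn g (support w) := by
  rw [eq_comm, ← sub_eq_zero, ent_sub_ent_mapDist,
    Fintype.sum_eq_zero_iff_of_nonneg (mul_log_mapDist_sub_log_nonneg hw)]
  constructor
  · intro h a ha a' ha' hgaa'
    by_contra hne
    have hpos : 0 < w a := (hw a).lt_of_ne' ha
    have hlt : w a < mapDist g w (g a) :=
      calc w a < w a + w a' := lt_add_of_pos_right _ ((hw a').lt_of_ne' ha')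
        _ ≤ mapDist g w (g a) := by
          simpa [mapDist, hgaa'] using Finset.add_le_sum
            (f := fun a'' => if g a'' = g a then w a'' else 0)
            (fun a'' _ => by split_ifs <;> simp [hw a'']) (Finset.mem_univ a)
            (Finset.mem_univ a') hne
    exact (mul_pos hpos (sub_pos.2 (log_lt_log hpos hlt))).ne' (congrFun h a)
  · intro hg
    ext a
    by_cases ha : w a = 0
    · simp [ha]
    · simp [mapDist_apply_of_injOn hg ha]

theorem ent_mapDist_of_injective [Fintype B] (hw : ∀ a, 0 ≤ w a) (hg : Injective g) :
    ent (mapDist g w) = ent w :=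
  (ent_mapDist_eq_iff_injOn hw).2 hg.injOn

end mapDist

section ProbIso

variable {S T U : Type*} [Fintype S] [Fintype T] [Fintype U] {p : S → ℝ} {q : T → ℝ}
  {u : U → ℝ}

theorem ProbIso.symm (h : ProbIso p q) : ProbIso q p := by
  obtain ⟨e, he⟩ := h
  exact ⟨e.symm, fun y => by rw [← he, e.apply_symm_apply]⟩

theorem ProbIso.trans (hpq : ProbIso p q) (hqu : ProbIso q u) : ProbIso p u := by
  obtain ⟨e, he⟩ := hpq
  obtain ⟨e', he'⟩ := hqu
  exact ⟨e.trans e', fun x => by rw [Equiv.trans_apply, he', he]⟩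

theorem probIso_of_bijOn {f : S → T} (hf : BijOn f (support p) (support q))
    (hfq : ∀ x ∈ support p, q (f x) = p x) : ProbIso p q :=
  ⟨hf.equiv f, fun x => hfq x x.2⟩

theorem ProbIso.exists_bijOn [Nonempty T] (h : ProbIso p q) :
    ∃ f : S → T, BijOn f (support p) (support q) ∧ ∀ x ∈ support p, q (f x) = p x := by
  obtain ⟨e, he⟩ := h
  let f : S → T := fun x => if hx : p x ≠ 0 then e ⟨x, hx⟩ else Classical.arbitrary T
  have hfe : ∀ x (hx : p x ≠ 0), f x = e ⟨x, hx⟩ := fun x hx => dif_pos hx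
  refine ⟨f, ⟨fun x hx => ?_, fun x hx x' hx' hxx' => ?_, fun y hy => ?_⟩, fun x hx => ?_⟩
  · rw [mem_support, hfe x hx]
    exact (e _).2
  · rw [hfe x hx, hfe x' hx'] at hxx'
    exact congrArg Subtype.val (e.injective (Subtype.ext hxx'))
  · refine ⟨e.symm ⟨y, hy⟩, (e.symm ⟨y, hy⟩).2, ?_⟩
    rw [hfe _ (e.symm ⟨y, hy⟩).2]
    simp
  · rw [hfe x hx, he]

theorem probIso_mapDist_of_injOn {g : S → T} (hg : InjOn g (support p)) :
    ProbIso p (mapDist g p) :=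
  probIso_of_bijOn (bijOn_mapDist_of_injOn hg) fun _ hx => mapDist_apply_of_injOn hg hx

end ProbIso

section coupling

variable {S T : Type*} [Fintype S] [Fintype T] {p : S → ℝ} {q : T → ℝ} {w : S × T → ℝ}

theorem mapDist_fst_apply (w : S × T → ℝ) (x : S) : mapDist Prod.fst w x = ∑ y, w (x, y) := by
  rw [mapDist, Fintype.sum_prod_type, Finset.sum_eq_single x] <;> simp +contextual

theorem mapDist_snd_apply (w : S × T → ℝ) (y : T) : mapDist Prod.snd w y = ∑ x, w (x, y) := by
  simp [mapDist, Fintype.sum_prod_type]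

theorem isCoupling_iff_mapDist :
    IsCoupling w p q ↔ IsDist w ∧ mapDist Prod.fst w = p ∧ mapDist Prod.snd w = q := by
  simp only [IsCoupling, funext_iff, mapDist_fst_apply, mapDist_snd_apply]

theorem IsCoupling.mapDist_fst (h : IsCoupling w p q) : mapDist Prod.fst w = p :=
  (isCoupling_iff_mapDist.1 h).2.1

theorem IsCoupling.mapDist_snd (h : IsCoupling w p q) : mapDist Prod.snd w = q :=
  (isCoupling_iff_mapDist.1 h).2.2

theorem IsCoupling.ent_left_le (h : IsCoupling w p q) : ent p ≤ ent w :=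
  h.mapDist_fst ▸ ent_mapDist_le h.1.1

theorem IsCoupling.ent_right_le (h : IsCoupling w p q) : ent q ≤ ent w :=
  h.mapDist_snd ▸ ent_mapDist_le h.1.1

theorem IsCoupling.mapDist_swap (h : IsCoupling w p q) :
    IsCoupling (mapDist Prod.swap w) q p := by
  refine isCoupling_iff_mapDist.2 ⟨h.1.mapDist _, ?_, ?_⟩
  · rw [mapDist_comp]
    exact h.mapDist_snd
  · rw [mapDist_comp]
    exact h.mapDist_fst

theorem isCoupling_prodDist (hp : IsDist p) (hq : IsDist q) : IsCoupling (prodDist p q) p q := by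
  refine ⟨⟨fun z => mul_nonneg (hp.1 _) (hq.1 _), ?_⟩, fun x => ?_, fun y => ?_⟩
  · rw [Fintype.sum_prod_type]
    simp [prodDist, ← Finset.sum_mul_sum, hp.2, hq.2]
  · simp [prodDist, ← Finset.mul_sum, hq.2]
  · simp [prodDist, ← Finset.sum_mul, hp.2]

theorem isCoupling_mapDist_graph (hp : IsDist p) {f : S → T} (hf : mapDist f p = q) :
    IsCoupling (mapDist (fun x => (x, f x)) p) p q := by
  refine isCoupling_iff_mapDist.2 ⟨hp.mapDist _, ?_, ?_⟩
  · rw [mapDist_comp]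
    exact mapDist_id p
  · rwa [mapDist_comp]

end coupling

section kdist

variable {S T : Type*} [Fintype S] [Fintype T] {p : S → ℝ} {q : T → ℝ} {w : S × T → ℝ}

theorem IsDist.nonempty (hp : IsDist p) : Nonempty S := by
  by_contra h
  have := hp.2
  simp [not_nonempty_iff.1 h] at this

theorem IsCoupling.two_mul_ent_sub_nonneg (h : IsCoupling w p q) :
    0 ≤ 2 * ent w - ent p - ent q := by
  linarith [h.ent_left_le, h.ent_right_le]

theorem kdist_nonneg (p : S → ℝ) (q : T → ℝ) : 0 ≤ kdist p q :=
  Real.sInf_nonneg fun _ ⟨_, hw, hd⟩ => hd ▸ hw.two_mul_ent_sub_nonneg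

theorem kdist_le (h : IsCoupling w p q) : kdist p q ≤ 2 * ent w - ent p - ent q :=
  csInf_le ⟨0, fun _ ⟨_, hw, hd⟩ => hd ▸ hw.two_mul_ent_sub_nonneg⟩ ⟨w, h, rfl⟩

theorem le_kdist (hp : IsDist p) (hq : IsDist q) {c : ℝ}
    (h : ∀ w, IsCoupling w p q → c ≤ 2 * ent w - ent p - ent q) : c ≤ kdist p q :=
  le_csInf ⟨_, _, isCoupling_prodDist hp hq, rfl⟩ fun _ ⟨w, hw, hd⟩ => hd ▸ h w hw

theorem kdist_comm (p : S → ℝ) (q : T → ℝ) : kdist p q = kdist q p := by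
  refine congrArg sInf (Set.ext fun d => ?_)
  constructor <;>
  · rintro ⟨w, hw, rfl⟩
    refine ⟨_, hw.mapDist_swap, ?_⟩
    rw [ent_mapDist_of_injective hw.1.1 Prod.swap_injective]
    ring

theorem kdist_le_ent_sub_of_mapDist_eq (hp : IsDist p) {f : S → T} (hf : mapDist f p = q) :
    kdist p q ≤ ent p - ent q := by
  have h := kdist_le (isCoupling_mapDist_graph hp hf)
  rwa [ent_mapDist_of_injective hp.1 fun _ _ h => (Prod.ext_iff.1 h).1, two_mul,
    add_sub_cancel_right] at h

theorem kdist_self (hp : IsDist p) : kdist p p = 0 :=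
  le_antisymm (by simpa using kdist_le_ent_sub_of_mapDist_eq hp (mapDist_id p))
    (kdist_nonneg p p)

theorem ProbIso.kdist_eq_zero (hp : IsDist p) (hq : IsDist q) (h : ProbIso p q) :
    kdist p q = 0 := by
  have := hq.nonempty
  obtain ⟨f, hf, hfq⟩ := h.exists_bijOn
  have hpush : mapDist f p = q := mapDist_eq_of_bijOn hf hfq
  have hent : ent q = ent p := hpush ▸ (ent_mapDist_eq_iff_injOn hp.1).2 hf.injOn
  refine le_antisymm ?_ (kdist_nonneg p q)
  simpa [hent] using kdist_le_ent_sub_of_mapDist_eq hp hpush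

end kdist

section glue

variable {S T U : Type*} [Fintype S] [Fintype T] [Fintype U] {p : S → ℝ} {q : T → ℝ}
  {u : U → ℝ} {w₁ : S × T → ℝ} {w₂ : T × U → ℝ}

/-- The relatively independent joining of two couplings over their common marginal `q`;
atoms with `q y = 0` get mass `0` through the convention `x / 0 = 0`. -/
noncomputable def glueDist (w₁ : S × T → ℝ) (w₂ : T × U → ℝ) (q : T → ℝ) : (S × T) × U → ℝ :=
  fun t => w₁ t.1 * w₂ (t.1.2, t.2) / q t.1.2

theorem mapDist_fst_glueDist (h₁ : IsCoupling w₁ p q) (h₂ : IsCoupling w₂ q u) :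
    mapDist Prod.fst (glueDist w₁ w₂ q) = w₁ := by
  ext ⟨x, y⟩
  have hle : w₁ (x, y) ≤ q y := h₁.mapDist_snd ▸ le_mapDist h₁.1.1 (x, y)
  rw [mapDist_fst_apply]
  simp only [glueDist]
  rw [← Finset.sum_div, ← Finset.mul_sum, h₂.2.1 y]
  rcases eq_or_ne (q y) 0 with hy | hy
  · simp [hy, le_antisymm (hy ▸ hle) (h₁.1.1 _)]
  · field_simp

theorem mapDist_glueDist_snd (h₁ : IsCoupling w₁ p q) (h₂ : IsCoupling w₂ q u) :
    mapDist (fun t => (t.1.2, t.2)) (glueDist w₁ w₂ q) = w₂ := by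
  ext ⟨y, z⟩
  have hle : w₂ (y, z) ≤ q y := h₂.mapDist_fst ▸ le_mapDist h₂.1.1 (y, z)
  have : mapDist (fun t : (S × T) × U => (t.1.2, t.2)) (glueDist w₁ w₂ q) (y, z) =
      ∑ x, glueDist w₁ w₂ q ((x, y), z) := by
    simp [mapDist, Fintype.sum_prod_type, ite_and]
  rw [this]
  simp only [glueDist]
  rw [← Finset.sum_div, ← Finset.sum_mul, h₁.2.2 y]
  rcases eq_or_ne (q y) 0 with hy | hy
  · simp [hy, le_antisymm (hy ▸ hle) (h₂.1.1 _)]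
  · field_simp

theorem isDist_glueDist (h₁ : IsCoupling w₁ p q) (h₂ : IsCoupling w₂ q u) :
    IsDist (glueDist w₁ w₂ q) := by
  refine ⟨fun t => div_nonneg (mul_nonneg (h₁.1.1 _) (h₂.1.1 _)) ?_, ?_⟩
  · exact h₁.mapDist_snd ▸ mapDist_nonneg h₁.1.1 _
  · rw [← sum_mapDist Prod.fst, mapDist_fst_glueDist h₁ h₂, h₁.1.2]

theorem ent_glueDist (h₁ : IsCoupling w₁ p q) (h₂ : IsCoupling w₂ q u) :
    ent (glueDist w₁ w₂ q) = ent w₁ + ent w₂ - ent q := by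
  set g := glueDist w₁ w₂ q
  have hq : mapDist (fun t => t.1.2) g = q := by
    rw [show (fun t : (S × T) × U => t.1.2) = Prod.snd ∘ Prod.fst from rfl, ← mapDist_comp,
      mapDist_fst_glueDist h₁ h₂, h₁.mapDist_snd]
  have hlog : ∀ t, g t * log (g t) =
      g t * (log (w₁ t.1) + log (w₂ (t.1.2, t.2)) - log (q t.1.2)) := by
    intro t
    by_cases ht : g t = 0
    · simp [ht]
    · obtain ⟨⟨h₁t, h₂t⟩, hqt⟩ : (w₁ t.1 ≠ 0 ∧ w₂ (t.1.2, t.2) ≠ 0) ∧ q t.1.2 ≠ 0 := by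
        simpa [g, glueDist, not_or] using ht
      simp only [g, glueDist, log_div (mul_ne_zero h₁t h₂t) hqt, log_mul h₁t h₂t]
  simp only [ent, hlog, mul_sub, mul_add, Finset.sum_sub_distrib, Finset.sum_add_distrib]
  rw [← sum_mapDist_mul Prod.fst g (fun b => log (w₁ b)),
    ← sum_mapDist_mul (fun t => (t.1.2, t.2)) g (fun b => log (w₂ b)),
    ← sum_mapDist_mul (fun t => t.1.2) g (fun b => log (q b)),
    mapDist_fst_glueDist h₁ h₂, mapDist_glueDist_snd h₁ h₂, hq]
  ring

theorem isCoupling_mapDist_glueDist (h₁ : IsCoupling w₁ p q) (h₂ : IsCoupling w₂ q u) :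
    IsCoupling (mapDist (fun t => (t.1.1, t.2)) (glueDist w₁ w₂ q)) p u := by
  refine isCoupling_iff_mapDist.2 ⟨(isDist_glueDist h₁ h₂).mapDist _, ?_, ?_⟩
  · rw [mapDist_comp, show Prod.fst ∘ (fun t : (S × T) × U => (t.1.1, t.2)) =
      Prod.fst ∘ Prod.fst from rfl, ← mapDist_comp, mapDist_fst_glueDist h₁ h₂, h₁.mapDist_fst]
  · rw [mapDist_comp, show Prod.snd ∘ (fun t : (S × T) × U => (t.1.1, t.2)) =
      Prod.snd ∘ (fun t => (t.1.2, t.2)) from rfl, ← mapDist_comp, mapDist_glueDist_snd h₁ h₂,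
      h₂.mapDist_snd]

theorem kdist_le_add_of_isCoupling (h₁ : IsCoupling w₁ p q) (h₂ : IsCoupling w₂ q u) :
    kdist p u ≤ (2 * ent w₁ - ent p - ent q) + (2 * ent w₂ - ent q - ent u) := by
  have hglue := ent_glueDist h₁ h₂
  have hle := ent_mapDist_le (g := fun t => (t.1.1, t.2)) (isDist_glueDist h₁ h₂).1
  linarith [kdist_le (isCoupling_mapDist_glueDist h₁ h₂)]

theorem kdist_triangle (hp : IsDist p) (hq : IsDist q) (hu : IsDist u) :
    kdist p u ≤ kdist p q + kdist q u := by
  suffices kdist p u - kdist q u ≤ kdist p q by linarith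
  refine le_kdist hp hq fun w₁ h₁ => ?_
  suffices kdist p u - (2 * ent w₁ - ent p - ent q) ≤ kdist q u by linarith
  exact le_kdist hq hu fun w₂ h₂ => by linarith [kdist_le_add_of_isCoupling h₁ h₂]

end glue

section optimal

variable {S T : Type*} [Fintype S] [Fintype T] {p : S → ℝ} {q : T → ℝ}

theorem continuous_ent : Continuous (ent : (S → ℝ) → ℝ) :=
  (continuous_finsetSum _ fun x _ => continuous_mul_log.comp (continuous_apply x)).neg

theorem isCompact_setOf_isCoupling (p : S → ℝ) (q : T → ℝ) :
    IsCompact {w : S × T → ℝ | IsCoupling w p q} := by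
  refine (isCompact_univ_pi fun _ => isCompact_Icc (a := (0 : ℝ)) (b := 1)).of_isClosed_subset
    ?_ fun w hw z _ => ⟨hw.1.1 z, ?_⟩
  · simp only [IsCoupling, IsDist, ofPred_and, ofPred_forall]
    refine ((isClosed_iInter fun z => isClosed_le continuous_const (continuous_apply z)).inter
      (isClosed_eq (by fun_prop) continuous_const)).inter
      ((isClosed_iInter fun x => isClosed_eq (by fun_prop) continuous_const).inter
      (isClosed_iInter fun y => isClosed_eq (by fun_prop) continuous_const))
  · exact hw.1.2 ▸ Finset.single_le_sum (fun z _ => hw.1.1 z) (Finset.mem_univ z)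

theorem exists_isCoupling_kdist_eq (hp : IsDist p) (hq : IsDist q) :
    ∃ w, IsCoupling w p q ∧ kdist p q = 2 * ent w - ent p - ent q := by
  obtain ⟨w, hw, hmin⟩ := (isCompact_setOf_isCoupling p q).exists_isMinOn
    ⟨_, isCoupling_prodDist hp hq⟩ (((continuous_const.mul continuous_ent).sub continuous_const).sub
      continuous_const).continuousOn
  exact ⟨w, hw, le_antisymm (kdist_le hw) (le_kdist hp hq fun w' hw' => hmin hw')⟩

theorem probIso_of_kdist_eq_zero (hp : IsDist p) (hq : IsDist q) (h : kdist p q = 0) :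
    ProbIso p q := by
  obtain ⟨w, hw, hk⟩ := exists_isCoupling_kdist_eq hp hq
  have hfst : ent (mapDist Prod.fst w) = ent w := by
    rw [hw.mapDist_fst]
    linarith [hw.ent_left_le, hw.ent_right_le]
  have hsnd : ent (mapDist Prod.snd w) = ent w := by
    rw [hw.mapDist_snd]
    linarith [hw.ent_left_le, hw.ent_right_le]
  have hwp : ProbIso w p :=
    hw.mapDist_fst ▸ probIso_mapDist_of_injOn ((ent_mapDist_eq_iff_injOn hw.1.1).1 hfst)
  have hwq : ProbIso w q :=
    hw.mapDist_snd ▸ probIso_mapDist_of_injOn ((ent_mapDist_eq_iff_injOn hw.1.1).1 hsnd)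
  exact hwp.symm.trans hwq

end optimal

theorem stmt10 :
    (∀ (S T : Type) [Fintype S] [Fintype T] (p : S → ℝ) (q : T → ℝ),
      IsDist p → IsDist q → 0 ≤ kdist p q) ∧
    (∀ (S T : Type) [Fintype S] [Fintype T] (p : S → ℝ) (q : T → ℝ),
      IsDist p → IsDist q → kdist p q = kdist q p) ∧
    (∀ (S : Type) [Fintype S] (p : S → ℝ), IsDist p → kdist p p = 0) ∧
    (∀ (S T U : Type) [Fintype S] [Fintype T] [Fintype U]
        (p : S → ℝ) (q : T → ℝ) (u : U → ℝ),
      IsDist p → IsDist q → IsDist u →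
        kdist p u ≤ kdist p q + kdist q u) ∧
    (∀ (S T : Type) [Fintype S] [Fintype T] (p : S → ℝ) (q : T → ℝ),
      IsDist p → IsDist q → (kdist p q = 0 ↔ ProbIso p q)) :=
  ⟨fun _ _ _ _ p q _ _ => kdist_nonneg p q,
    fun _ _ _ _ p q _ _ => kdist_comm p q,
    fun _ _ _ hp => kdist_self hp,
    fun _ _ _ _ _ _ _ _ _ => kdist_triangle,
    fun _ _ _ _ _ _ hp hq => ⟨probIso_of_kdist_eq_zero hp hq, ProbIso.kdist_eq_zero hp hq⟩⟩
end

section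
/- Local estimate: Let S be a finite set, and let p, q ∈ Δ(S) be two distributions. Set X = (S,p), Y = (S,q), and α = (1/2)|p − q|₁. Then k(X,Y) ≤ 2(α·ln|S| + Ent(Λ_α)), where Λ_α is the binary probability space with atom weights α and 1−α. -/
open scoped Classical BigOperators
open Finset

/-! Write `p = m + a` and `q = m + b` with `m = min p q`, so that `a` and `b` both have mass `α`.
The coupling `w` that keeps `m` on the diagonal and couples `a` with `b` independently has
`ent w ≤ ent m + ent a + ent b + α log α`, while concavity of `-x log x` gives
`ent p ≥ ent m + ent a - Ent(Λ_α)`, and likewise for `q`. Hence `2 ent w - ent p - ent q` is at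
most `ent a + ent b - 2 (1 - α) log (1 - α)`, and Jensen bounds `ent a` and `ent b` by
`α log |S| - α log α`. -/

open Real

namespace Real

lemma negMulLog_add_le {u v : ℝ} (hu : 0 ≤ u) (hv : 0 ≤ v) :
    negMulLog (u + v) ≤ negMulLog u + negMulLog v := by
  have mul_log_le : ∀ s t : ℝ, 0 ≤ s → 0 ≤ t → s * log s ≤ s * log (s + t) := by
    intro s t hs ht
    rcases hs.eq_or_lt with rfl | hs
    · simp
    · exact mul_le_mul_of_nonneg_left (log_le_log hs (by linarith)) hs.le
  have hu' := mul_log_le u v hu hv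
  have hv' := mul_log_le v u hv hu
  rw [add_comm v u] at hv'
  simp only [negMulLog]
  linarith

lemma negMulLog_add_ge {x y c d : ℝ} (hx : 0 ≤ x) (hy : 0 ≤ y) (hxc : x ≤ c) (hyd : y ≤ d)
    (hcd : c + d = 1) :
    negMulLog x + negMulLog y + x * log c + y * log d ≤ negMulLog (x + y) := by
  rcases (hx.trans hxc).eq_or_lt with rfl | hc
  · obtain rfl : x = 0 := le_antisymm hxc hx
    obtain rfl : d = 1 := by linarith
    simp
  rcases (hy.trans hyd).eq_or_lt with rfl | hd
  · obtain rfl : y = 0 := le_antisymm hyd hy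
    obtain rfl : c = 1 := by linarith
    simp
  have rescale : ∀ s t : ℝ, 0 < t → t * negMulLog (s / t) = negMulLog s + s * log t := by
    intro s t ht
    have h := negMulLog_mul t (s / t)
    have h' : s / t * negMulLog t = -(s * log t) := by rw [negMulLog]; field_simp
    rw [mul_div_cancel₀ _ ht.ne', h'] at h
    linarith
  have jensen := concaveOn_negMulLog.2 (Set.mem_Ici.2 (div_nonneg hx hc.le))
    (Set.mem_Ici.2 (div_nonneg hy hd.le)) hc.le hd.le hcd
  simp only [smul_eq_mul, mul_div_cancel₀ _ hc.ne', mul_div_cancel₀ _ hd.ne'] at jensen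
  rw [rescale x c hc, rescale y d hd] at jensen
  linarith

end Real

section

variable {S T : Type*} [Fintype S] [Fintype T]

lemma ent_eq_sum_negMulLog (p : S → ℝ) : ent p = ∑ x, negMulLog (p x) := by
  simp [ent, negMulLog_eq_neg]

lemma ent_nonneg {p : S → ℝ} (hp : IsDist p) : 0 ≤ ent p := by
  rw [ent_eq_sum_negMulLog]
  refine sum_nonneg fun x _ => negMulLog_nonneg (hp.1 x) ?_
  rw [← hp.2]
  exact single_le_sum (fun y _ => hp.1 y) (mem_univ x)

lemma ent_add_le {u v : S → ℝ} (hu : ∀ x, 0 ≤ u x) (hv : ∀ x, 0 ≤ v x) :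
    ent (u + v) ≤ ent u + ent v := by
  simp only [ent_eq_sum_negMulLog, Pi.add_apply, ← sum_add_distrib]
  exact sum_le_sum fun x _ => negMulLog_add_le (hu x) (hv x)

lemma ent_smul (c : ℝ) (u : S → ℝ) : ent (c • u) = c * ent u + (∑ x, u x) * negMulLog c := by
  simp only [ent_eq_sum_negMulLog, Pi.smul_apply, smul_eq_mul, negMulLog_mul, sum_add_distrib,
    mul_sum, sum_mul]
  ring

lemma ent_prodDist (p : S → ℝ) (q : T → ℝ) :
    ent (prodDist p q) = (∑ y, q y) * ent p + (∑ x, p x) * ent q := by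
  simp only [ent_eq_sum_negMulLog, prodDist, negMulLog_mul, Fintype.sum_prod_type,
    sum_add_distrib, mul_sum, sum_mul]
  congr 1
  exact sum_comm

lemma sum_prodDist (p : S → ℝ) (q : T → ℝ) :
    ∑ z, prodDist p q z = (∑ x, p x) * ∑ y, q y := by
  simp [prodDist, Fintype.sum_prod_type, sum_mul_sum]

lemma ent_le_log_card {p : S → ℝ} (hp : ∀ x, 0 ≤ p x) :
    ent p ≤ (∑ x, p x) * log (Fintype.card S) + negMulLog (∑ x, p x) := by
  rcases isEmpty_or_nonempty S with hS | hS
  · simp [ent]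
  set n : ℝ := (Fintype.card S : ℝ)
  have hn : 0 < n := by simpa [n] using Fintype.card_pos
  have jensen := concaveOn_negMulLog.le_map_sum (t := univ) (w := fun _ => n⁻¹) (p := p)
    (fun _ _ => by positivity) (by simp [n, hn.ne']) (fun x _ => Set.mem_Ici.2 (hp x))
  simp only [smul_eq_mul, ← mul_sum, negMulLog_mul, ← ent_eq_sum_negMulLog] at jensen
  have hinv : negMulLog n⁻¹ = n⁻¹ * log n := by simp [negMulLog, log_inv]
  rw [hinv] at jensen
  have := mul_le_mul_of_nonneg_left jensen hn.le
  field_simp at this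
  linarith

lemma ent_add_ge {u v : S → ℝ} (hu : ∀ x, 0 ≤ u x) (hv : ∀ x, 0 ≤ v x)
    (huv : ∑ x, u x + ∑ x, v x = 1) :
    ent u + ent v - binEntropy (∑ x, v x) ≤ ent (u + v) := by
  have hle : ∀ (f : S → ℝ), (∀ x, 0 ≤ f x) → ∀ x, f x ≤ ∑ y, f y :=
    fun f hf x => single_le_sum (fun y _ => hf y) (mem_univ x)
  have pointwise := fun x => negMulLog_add_ge (hu x) (hv x) (hle u hu x) (hle v hv x) huv
  have summed : ent u + ent v + (∑ x, u x) * log (∑ x, u x) + (∑ x, v x) * log (∑ x, v x)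
      ≤ ent (u + v) := by
    have h := sum_le_sum fun x (_ : x ∈ univ) => pointwise x
    simp only [sum_add_distrib, ← sum_mul, ← ent_eq_sum_negMulLog] at h
    exact h
  rw [binEntropy_eq_negMulLog_add_negMulLog_one_sub, ← eq_sub_of_add_eq huv, negMulLog,
    negMulLog]
  linarith

lemma ent_ite_bool (t : ℝ) : ent (fun b : Bool => if b then t else 1 - t) = binEntropy t := by
  rw [binEntropy_eq_negMulLog_add_negMulLog_one_sub, ent_eq_sum_negMulLog, Fintype.sum_bool]
  simp

lemma kdist_le_of_isCoupling {p : S → ℝ} {q : T → ℝ} {w : S × T → ℝ} (hw : IsCoupling w p q) :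
    kdist p q ≤ 2 * ent w - ent p - ent q := by
  refine csInf_le ⟨-ent p - ent q, ?_⟩ ⟨w, hw, rfl⟩
  rintro d ⟨w', hw', rfl⟩
  linarith [ent_nonneg hw'.1]

noncomputable def maximalCoupling (m a b : S → ℝ) : S × S → ℝ :=
  (fun z => if z.1 = z.2 then m z.1 else 0) + (∑ x, a x)⁻¹ • prodDist a b

lemma inv_sum_mul_mul_sum {a : S → ℝ} (ha : ∀ x, 0 ≤ a x) (x : S) :
    (∑ y, a y)⁻¹ * (a x * ∑ y, a y) = a x := by
  rcases eq_or_ne (∑ y, a y) 0 with h | h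
  · rw [Fintype.sum_eq_zero_iff_of_nonneg fun y => ha y] at h
    simp [h]
  · field_simp

lemma isCoupling_maximalCoupling {m a b : S → ℝ} (hm : ∀ x, 0 ≤ m x) (ha : ∀ x, 0 ≤ a x)
    (hb : ∀ x, 0 ≤ b x) (hab : ∑ x, a x = ∑ x, b x) (hma : ∑ x, m x + ∑ x, a x = 1) :
    IsCoupling (maximalCoupling m a b) (m + a) (m + b) := by
  have left : ∀ x, ∑ y, maximalCoupling m a b (x, y) = (m + a) x := by
    intro x
    simp only [maximalCoupling, prodDist, Pi.add_apply, Pi.smul_apply, smul_eq_mul,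
      sum_add_distrib, ← mul_sum, ← hab, inv_sum_mul_mul_sum ha]
    simp
  have right : ∀ y, ∑ x, maximalCoupling m a b (x, y) = (m + b) y := by
    intro y
    simp only [maximalCoupling, prodDist, Pi.add_apply, Pi.smul_apply, smul_eq_mul,
      sum_add_distrib, ← mul_sum, mul_comm _ (b y), hab, inv_sum_mul_mul_sum hb]
    simp [sum_ite_eq']
  refine ⟨⟨fun z => ?_, ?_⟩, left, right⟩
  · have hα : 0 ≤ (∑ x, a x)⁻¹ := inv_nonneg.2 (sum_nonneg fun x _ => ha x)
    refine add_nonneg ?_ (mul_nonneg hα (mul_nonneg (ha _) (hb _)))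
    dsimp only
    split_ifs <;> simp [hm]
  · rw [Fintype.sum_prod_type]
    simp only [left, Pi.add_apply, sum_add_distrib, hma]

lemma ent_diagonal (m : S → ℝ) :
    ent (fun z : S × S => if z.1 = z.2 then m z.1 else 0) = ent m := by
  simp [ent_eq_sum_negMulLog, Fintype.sum_prod_type, apply_ite negMulLog]

lemma ent_inv_smul_prodDist {a b : S → ℝ} (ha : ∀ x, 0 ≤ a x) (hb : ∀ x, 0 ≤ b x)
    (hab : ∑ x, a x = ∑ x, b x) :
    ent ((∑ x, a x)⁻¹ • prodDist a b) = ent a + ent b - negMulLog (∑ x, a x) := by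
  rcases eq_or_ne (∑ x, a x) 0 with h | h
  · have ha0 := (Fintype.sum_eq_zero_iff_of_nonneg fun x => ha x).1 h
    have hb0 := (Fintype.sum_eq_zero_iff_of_nonneg fun x => hb x).1 (hab ▸ h)
    simp [ha0, hb0, ent]
  · rw [ent_smul, ent_prodDist, sum_prodDist, ← hab, negMulLog, negMulLog, log_inv]
    field_simp
    ring

lemma ent_maximalCoupling_le {m a b : S → ℝ} (hm : ∀ x, 0 ≤ m x) (ha : ∀ x, 0 ≤ a x)
    (hb : ∀ x, 0 ≤ b x) (hab : ∑ x, a x = ∑ x, b x) :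
    ent (maximalCoupling m a b) ≤ ent m + ent a + ent b - negMulLog (∑ x, a x) := by
  have hα : 0 ≤ (∑ x, a x)⁻¹ := inv_nonneg.2 (sum_nonneg fun x _ => ha x)
  calc ent (maximalCoupling m a b)
      ≤ ent (fun z : S × S => if z.1 = z.2 then m z.1 else 0)
          + ent ((∑ x, a x)⁻¹ • prodDist a b) := by
        refine ent_add_le (fun z => ?_) (fun z => ?_)
        · split_ifs <;> simp [hm]
        · exact mul_nonneg hα (mul_nonneg (ha _) (hb _))
    _ = ent m + ent a + ent b - negMulLog (∑ x, a x) := by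
        rw [ent_diagonal, ent_inv_smul_prodDist ha hb hab]
        ring

theorem kdist_add_add_le {m a b : S → ℝ} (hm : ∀ x, 0 ≤ m x) (ha : ∀ x, 0 ≤ a x)
    (hb : ∀ x, 0 ≤ b x) (hab : ∑ x, a x = ∑ x, b x) (hma : ∑ x, m x + ∑ x, a x = 1) :
    kdist (m + a) (m + b) ≤
      2 * ((∑ x, a x) * log (Fintype.card S) + binEntropy (∑ x, a x)) := by
  have hmb : ∑ x, m x + ∑ x, b x = 1 := hab ▸ hma
  have hcoupling := kdist_le_of_isCoupling (isCoupling_maximalCoupling hm ha hb hab hma)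
  have hw := ent_maximalCoupling_le hm ha hb hab
  have hp := ent_add_ge hm ha hma
  have hq := ent_add_ge hm hb hmb
  have ha_max := ent_le_log_card ha
  have hb_max := ent_le_log_card hb
  rw [← hab] at hq hb_max
  rw [binEntropy_eq_negMulLog_add_negMulLog_one_sub] at hp hq ⊢
  linarith

lemma sum_sub_min_eq_half_sum_abs {p q : S → ℝ} (h : ∑ x, p x = ∑ x, q x) :
    ∑ x, (p x - min (p x) (q x)) = (∑ x, |p x - q x|) / 2 := by
  have pointwise : ∀ x, p x - min (p x) (q x) = (|p x - q x| + (p x - q x)) / 2 := by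
    intro x
    rcases le_total (p x) (q x) with hle | hle
    · rw [min_eq_left hle, abs_of_nonpos (sub_nonpos.2 hle)]; ring
    · rw [min_eq_right hle, abs_of_nonneg (sub_nonneg.2 hle)]; ring
  simp only [pointwise, ← sum_div, sum_add_distrib, sum_sub_distrib, h, sub_self, add_zero]

end

theorem stmt16 {S : Type*} [Fintype S] (p q : S → ℝ)
    (hp : IsDist p) (hq : IsDist q) :
    kdist p q ≤
      2 * (((∑ x, |p x - q x|) / 2) * Real.log (Fintype.card S)
        + ent (fun b : Bool =>
            if b then (∑ x, |p x - q x|) / 2 else 1 - (∑ x, |p x - q x|) / 2)) := by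
  set m : S → ℝ := fun x => min (p x) (q x)
  have hsum_p : ∑ x, (p - m) x = (∑ x, |p x - q x|) / 2 :=
    sum_sub_min_eq_half_sum_abs (hp.2.trans hq.2.symm)
  have hsum_q : ∑ x, (q - m) x = (∑ x, |p x - q x|) / 2 := by
    simp only [m, min_comm (p _), abs_sub_comm (p _)]
    exact sum_sub_min_eq_half_sum_abs (hq.2.trans hp.2.symm)
  have key := kdist_add_add_le (m := m) (a := p - m) (b := q - m)
    (fun x => le_min (hp.1 x) (hq.1 x)) (fun x => sub_nonneg.2 (min_le_left _ _))
    (fun x => sub_nonneg.2 (min_le_right _ _)) (hsum_p.trans hsum_q.symm)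
    (by rw [← sum_add_distrib]; simpa using hp.2)
  rwa [add_sub_cancel, add_sub_cancel, hsum_p, ← ent_ite_bool] at key
end
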